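/- A nonconstant polynomial u ∈ ℤ[X] is locally nilpotent at 1 but not nilpotent at 1 if and only if u(X) = X + 1; and u is locally nilpotent at −1 but not nilpotent at −1 if and only if u(X) = X − 1. In particular the sets S₁ and S₋₁ are singletons. -/

import Mathlib

open Polynomial

/-- The `n`-th compositional iterate of the polynomial `u`, evaluated at `r`. -/
def iterEval (u : Polynomial ℤ) (n : ℕ) (r : ℤ) : ℤ :=
  (fun x => Polynomial.eval x u)^[n] r

/-- `u` is weakly locally nilpotent at `r` outside `A`: for every prime `p ∉ A`
there is `m ≥ 1` with `p ∣ u^{(m)}(r)`. -/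
def WeaklyLocallyNilpotentAt (u : Polynomial ℤ) (r : ℤ) (A : Set ℕ) : Prop :=
  ∀ p : ℕ, Nat.Prime p → p ∉ A → ∃ m : ℕ, 1 ≤ m ∧ (p : ℤ) ∣ iterEval u m r

/-- `u` is locally nilpotent at `r`: for every prime `p` there is `m ≥ 1`
with `p ∣ u^{(m)}(r)`. -/
def LocallyNilpotentAt (u : Polynomial ℤ) (r : ℤ) : Prop :=
  ∀ p : ℕ, Nat.Prime p → ∃ m : ℕ, 1 ≤ m ∧ (p : ℤ) ∣ iterEval u m r

/-- `u` is nilpotent at `r`: some iterate `u^{(n)}(r)` (with `n ≥ 1`) equals `0`. -/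
def IsNilpotentAt (u : Polynomial ℤ) (r : ℤ) : Prop :=
  ∃ n : ℕ, 1 ≤ n ∧ iterEval u n r = 0

/-- `u` is nilpotent at `r` with nilpotency index exactly `i`. -/
def NilpotentOfIndex (u : Polynomial ℤ) (r : ℤ) (i : ℕ) : Prop :=
  1 ≤ i ∧ iterEval u i r = 0 ∧ ∀ m : ℕ, 1 ≤ m → m < i → iterEval u m r ≠ 0


private lemma prod_Icc_one_eq_factorial (k : ℕ) :
    ∏ t ∈ Finset.Icc 1 k, t = k.factorial := by
  induction k with
  | zero => simp
  | succ k ih =>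
      rw [Finset.prod_Icc_succ_top (by omega), ih, Nat.factorial_succ, mul_comm]

private lemma factorial_mul_prod_block (N k : ℕ) :
    N.factorial * ∏ t ∈ Finset.Icc 1 k, (N + t) = (N + k).factorial := by
  induction k with
  | zero => simp
  | succ k ih =>
      rw [Finset.prod_Icc_succ_top (by omega), ← mul_assoc, ih, ← add_assoc]
      rw [Nat.factorial_succ, mul_comm]

private lemma choose_mul_factorial_eq_prod_block (N k : ℕ) :
    (N + k).choose k * k.factorial = ∏ t ∈ Finset.Icc 1 k, (N + t) := by
  have h := Nat.choose_mul_factorial_mul_factorial (show k ≤ N + k by omega)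
  have h2 : N + k - k = N := by omega
  rw [h2] at h
  have h3 := factorial_mul_prod_block N k
  have hN : N.factorial ≠ 0 := Nat.factorial_ne_zero N
  apply Nat.eq_of_mul_eq_mul_right (Nat.factorial_pos N)
  rw [h, ← h3]; ring

/-- number of primes ≤ k is at most k/2 for even k ≥ 2 -/
private lemma card_primes_le_half (k : ℕ) (hk : 2 ≤ k) (hke : Even k)
    (S : Finset ℕ) (hS : ∀ q ∈ S, Nat.Prime q ∧ q ≤ k) : S.card ≤ k / 2 := by
  have : S.card ≤ (Finset.range (k / 2)).card := by
    apply Finset.card_le_card_of_injOn (fun q => if q = 2 then 0 else (q - 1) / 2)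
    · intro q hq
      obtain ⟨hqp, hqk⟩ := hS q hq
      by_cases h2 : q = 2
      · simp [h2]; omega
      · have hodd : Odd q := hqp.odd_of_ne_two h2
        have hq3 : 3 ≤ q := by
          have := hqp.two_le; rcases hodd with ⟨m, hm⟩; omega
        have hqk1 : q ≤ k - 1 := by
          rcases hodd with ⟨m, hm⟩; rcases hke with ⟨l, hl⟩; omega
        simp only [h2, if_false, Finset.mem_coe, Finset.mem_range]
        rcases hodd with ⟨m, hm⟩
        rcases hke with ⟨l, hl⟩
        omega
    · intro x hx y hy hxy
      obtain ⟨hxp, hxk⟩ := hS x (by simpa using hx)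
      obtain ⟨hyp, hyk⟩ := hS y (by simpa using hy)
      by_cases h2x : x = 2 <;> by_cases h2y : y = 2
      · omega
      · exfalso
        have hodd : Odd y := hyp.odd_of_ne_two h2y
        have : 3 ≤ y := by have := hyp.two_le; rcases hodd with ⟨m, hm⟩; omega
        simp only [h2x, if_pos, h2y, if_neg, if_false] at hxy
        rcases hodd with ⟨m, hm⟩; omega
      · exfalso
        have hodd : Odd x := hxp.odd_of_ne_two h2x
        have : 3 ≤ x := by have := hxp.two_le; rcases hodd with ⟨m, hm⟩; omega
        simp only [h2x, if_neg, h2y, if_pos, if_false] at hxy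
        rcases hodd with ⟨m, hm⟩; omega
      · simp only [h2x, h2y, if_false] at hxy
        have hox : Odd x := hxp.odd_of_ne_two h2x
        have hoy : Odd y := hyp.odd_of_ne_two h2y
        rcases hox with ⟨m, hm⟩; rcases hoy with ⟨l, hl⟩; omega
  simpa using this

/-- Main counting lemma: k consecutive integers starting above k(k+1)
cannot all be k-smooth (k even, k ≥ 2). -/
private lemma smooth_block_contradiction (k N : ℕ) (hk : 2 ≤ k) (hke : Even k)
    (hN : k * (k + 1) ≤ N)
    (hsmooth : ∀ t, 1 ≤ t → t ≤ k → ∀ q, Nat.Prime q → q ∣ (N + t) → q ≤ k) :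
    False := by
  set C := (N + k).choose k with hC
  have hCpos : 0 < C := Nat.choose_pos (by omega)
  have hkey : C * k.factorial = ∏ t ∈ Finset.Icc 1 k, (N + t) :=
    choose_mul_factorial_eq_prod_block N k
  -- lower bound : N^k ≤ C * k^k
  have hlow : N ^ k ≤ C * k ^ k := by
    have h1 : ∀ t ∈ Finset.Icc 1 k, N * t ≤ (N + t) * k := by
      intro t ht
      simp only [Finset.mem_Icc] at ht
      nlinarith [ht.1, ht.2]
    have h2 : ∏ t ∈ Finset.Icc 1 k, (N * t) ≤ ∏ t ∈ Finset.Icc 1 k, ((N + t) * k) :=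
      Finset.prod_le_prod' h1
    rw [Finset.prod_mul_distrib, Finset.prod_mul_distrib] at h2
    simp only [Finset.prod_const, Nat.card_Icc, Nat.add_sub_cancel] at h2
    rw [prod_Icc_one_eq_factorial] at h2
    rw [← hkey] at h2
    -- h2 : N^k * k! ≤ C * k! * k^k
    have hfac : 0 < k.factorial := Nat.factorial_pos k
    calc N ^ k = N ^ k * k.factorial / k.factorial := by
          rw [Nat.mul_div_cancel _ hfac]
      _ ≤ C * k.factorial * k ^ k / k.factorial := Nat.div_le_div_right h2
      _ = C * k ^ k := by
          rw [mul_comm C k.factorial, mul_assoc, Nat.mul_div_cancel_left _ hfac]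
  -- upper bound : C ≤ (N+k)^(k/2)
  have hsupp : ∀ q ∈ C.primeFactors, q ^ C.factorization q ≤ N + k ∧ q.Prime ∧ q ≤ k := by
    intro q hq
    have hqp : q.Prime := Nat.prime_of_mem_primeFactors hq
    have hqd : q ∣ C := Nat.dvd_of_mem_primeFactors hq
    refine ⟨Nat.pow_factorization_choose_le (by omega), hqp, ?_⟩
    have hqd2 : q ∣ ∏ t ∈ Finset.Icc 1 k, (N + t) := by
      rw [← hkey]; exact hqd.mul_right _
    obtain ⟨t, ht, hdvd⟩ := (Nat.Prime.prime hqp).exists_mem_finset_dvd hqd2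
    simp only [Finset.mem_Icc] at ht
    exact hsmooth t ht.1 ht.2 q hqp hdvd
  have hupp : C ≤ (N + k) ^ (k / 2) := by
    have h1 : C = ∏ q ∈ C.primeFactors, q ^ C.factorization q := by
      rw [← Nat.support_factorization]
      exact (Nat.factorization_prod_pow_eq_self hCpos.ne').symm
    have h2 : ∏ q ∈ C.primeFactors, q ^ C.factorization q
        ≤ ∏ _q ∈ C.primeFactors, (N + k) := by
      apply Finset.prod_le_prod'
      intro q hq; exact (hsupp q hq).1
    rw [Finset.prod_const] at h2
    have h3 : C.primeFactors.card ≤ k / 2 := by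
      apply card_primes_le_half k hk hke
      intro q hq; exact ⟨(hsupp q hq).2.1, (hsupp q hq).2.2⟩
    calc C = ∏ q ∈ C.primeFactors, q ^ C.factorization q := h1
      _ ≤ (N + k) ^ C.primeFactors.card := h2
      _ ≤ (N + k) ^ (k / 2) := Nat.pow_le_pow_right (by omega) h3
  -- combine
  obtain ⟨h, hh⟩ := hke
  have hk2 : k = 2 * h := by omega
  have hhpos : 1 ≤ h := by omega
  have hfinal : N ^ (2 * h) ≤ ((N + k) * k ^ 2) ^ h := by
    calc N ^ (2 * h) = N ^ k := by rw [hk2]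
      _ ≤ C * k ^ k := hlow
      _ ≤ (N + k) ^ (k / 2) * k ^ k := Nat.mul_le_mul_right _ hupp
      _ = (N + k) ^ h * (k ^ 2) ^ h := by
          rw [hk2, show 2 * h / 2 = h by omega, ← pow_mul, two_mul, pow_add]
      _ = ((N + k) * k ^ 2) ^ h := by rw [mul_pow]
  have hNN : N ^ (2 * h) = (N ^ 2) ^ h := by rw [← pow_mul]
  rw [hNN] at hfinal
  have hle : N ^ 2 ≤ (N + k) * k ^ 2 := by
    by_contra hcon
    push_neg at hcon
    have := Nat.pow_lt_pow_left hcon (show h ≠ 0 by omega)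
    omega
  nlinarith [hN, hk]

private lemma iterEval_succ (u : Polynomial ℤ) (n : ℕ) (r : ℤ) :
    iterEval u (n + 1) r = Polynomial.eval (iterEval u n r) u := by
  unfold iterEval
  rw [Function.iterate_succ_apply']

private theorem hard_one (u : Polynomial ℤ)
    (hL : LocallyNilpotentAt u 1) (hN : ¬ IsNilpotentAt u 1) :
    u = Polynomial.X + 1 := by
  set a : ℕ → ℤ := fun m => iterEval u m 1 with ha
  have ha0 : a 0 = 1 := rfl
  have hsucc : ∀ m, a (m + 1) = Polynomial.eval (a m) u := fun m => iterEval_succ u m 1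
  have hnz : ∀ m, 1 ≤ m → a m ≠ 0 := fun m hm h0 => hN ⟨m, hm, h0⟩
  -- transport of divisibility along the orbit
  have htrans : ∀ (i j t : ℕ), (a i - a j) ∣ (a (i + t) - a (j + t)) := by
    intro i j t
    induction t with
    | zero => simp
    | succ t ih =>
        have h2 : (a (i + t) - a (j + t)) ∣ (a (i + t + 1) - a (j + t + 1)) := by
          rw [hsucc, hsucc]
          exact Polynomial.sub_dvd_eval_sub _ _ u
        have h3 := dvd_trans ih h2
        have e1 : i + (t + 1) = i + t + 1 := by omega
        have e2 : j + (t + 1) = j + t + 1 := by omega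
        rw [e1, e2]
        exact h3
  -- injectivity of the orbit
  have hinj : ∀ i j, i < j → a i ≠ a j := by
    intro i j hij heq
    have hper : ∀ t, a (i + t) = a (j + t) := by
      intro t
      induction t with
      | zero => simpa using heq
      | succ t ih =>
          have e1 : i + (t + 1) = (i + t) + 1 := by omega
          have e2 : j + (t + 1) = (j + t) + 1 := by omega
          rw [e1, e2, hsucc, hsucc, ih]
    have hfold : ∀ m, ∃ m', m' < j ∧ a m = a m' := by
      intro m
      induction m using Nat.strong_induction_on with
      | _ m IH =>
        by_cases hmj : m < j
        · exact ⟨m, hmj, rfl⟩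
        · push_neg at hmj
          have he : j + (m - j) = m := by omega
          have h1 : a m = a (i + (m - j)) := by
            calc a m = a (j + (m - j)) := by rw [he]
              _ = a (i + (m - j)) := (hper (m - j)).symm
          have hlt : i + (m - j) < m := by omega
          obtain ⟨m', hm', heq'⟩ := IH _ hlt
          exact ⟨m', hm', by rw [h1, heq']⟩
    set B : ℕ := Finset.sup (Finset.range j) (fun m => (a m).natAbs) with hB
    obtain ⟨P, hPB, hPp⟩ := Nat.exists_infinite_primes (B + 1)
    obtain ⟨M, hM1, hMd⟩ := hL P hPp
    obtain ⟨m', hm'j, heqm⟩ := hfold M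
    have hdvd' : (P : ℤ) ∣ a m' := heqm ▸ hMd
    have hnz' : a m' ≠ 0 := by
      rcases Nat.eq_zero_or_pos m' with h0 | h0
      · rw [h0, ha0]; norm_num
      · exact hnz m' h0
    have hPdvd : P ∣ (a m').natAbs := by
      have := Int.natAbs_dvd_natAbs.mpr hdvd'
      simpa using this
    have hle : P ≤ (a m').natAbs := Nat.le_of_dvd (Int.natAbs_pos.mpr hnz') hPdvd
    have hmem : (a m').natAbs ≤ B :=
      Finset.le_sup (f := fun m => (a m).natAbs) (Finset.mem_range.mpr hm'j)
    omega
  -- the folding lemma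
  have hfoldlem : ∀ (n i : ℕ) (q : ℕ), i ≤ n → Nat.Prime q →
      (q : ℤ) ∣ (a (n + 1) - a i) → ∃ j, 1 ≤ j ∧ j ≤ n ∧ (q : ℤ) ∣ a j := by
    intro n i q hin hq hdvd
    have hstep : ∀ t, (q : ℤ) ∣ (a (n + 1 + t) - a (i + t)) :=
      fun t => dvd_trans hdvd (htrans (n + 1) i t)
    have hfold2 : ∀ m, ∃ j, j ≤ n ∧ (q : ℤ) ∣ (a m - a j) := by
      intro m
      induction m using Nat.strong_induction_on with
      | _ m IH =>
        by_cases hmn : m ≤ n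
        · exact ⟨m, hmn, by simp⟩
        · push_neg at hmn
          have he : n + 1 + (m - (n + 1)) = m := by omega
          have h1 : (q : ℤ) ∣ (a m - a (i + (m - (n + 1)))) := by
            have := hstep (m - (n + 1))
            rwa [he] at this
          have hlt : i + (m - (n + 1)) < m := by omega
          obtain ⟨j, hjn, hdj⟩ := IH _ hlt
          exact ⟨j, hjn, by
            have := dvd_add h1 hdj
            simpa using this⟩
    obtain ⟨M, hM1, hMd⟩ := hL q hq
    obtain ⟨j, hjn, hdj⟩ := hfold2 M
    have hdaj : (q : ℤ) ∣ a j := by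
      have : (q : ℤ) ∣ a M - (a M - a j) := dvd_sub hMd hdj
      simpa using this
    rcases Nat.eq_zero_or_pos j with h0 | h0
    · exfalso
      rw [h0, ha0] at hdaj
      have := Int.le_of_dvd (by norm_num) hdaj
      have := hq.two_le
      omega
    · exact ⟨j, h0, hjn, hdaj⟩
  -- main induction : a n = n + 1 for all n
  have key : ∀ n, ∀ j, j ≤ n → a j = (j : ℤ) + 1 := by
    intro n
    induction n with
    | zero =>
        intro j hj
        have : j = 0 := by omega
        rw [this, ha0]; norm_num
    | succ n IH =>
        intro j hj
        rcases Nat.lt_or_ge j (n + 1) with h | h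
        · exact IH j (by omega)
        · have hj' : j = n + 1 := by omega
          subst hj'
          by_contra hfail
          set D : ℤ := a (n + 1) - ((n : ℤ) + 1) with hD
          have hADval : a (n + 1) = D + ((n : ℤ) + 1) := by rw [hD]; ring
          have hDnot1 : D ≠ 1 := by
            intro h1
            apply hfail
            rw [hADval, h1]
            push_cast
            ring
          -- every prime divisor of D equals n+1
          have hsmallp : ∀ q : ℕ, Nat.Prime q → (q : ℤ) ∣ D → q = n + 1 := by
            intro q hq hdvd
            have hDn : (q : ℤ) ∣ a (n + 1) - a n := by
              rw [IH n le_rfl]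
              exact hdvd
            obtain ⟨j, hj1, hjn, hdj⟩ := hfoldlem n n q le_rfl hq hDn
            rw [IH j hjn] at hdj
            have hqle : q ≤ j + 1 := by
              have h1 := Int.le_of_dvd (by positivity) hdj
              exact_mod_cast h1
            have hqlen1 : q ≤ n + 1 := by omega
            rcases eq_or_lt_of_le hqlen1 with he | hlt
            · exact he
            · exfalso
              have hq2 := hq.two_le
              have hqn : q ≤ n := by omega
              have h1 : a n - a (n - q) = (q : ℤ) := by
                rw [IH n le_rfl, IH (n - q) (by omega)]
                omega
              have h2 := htrans n (n - q) 1
              rw [h1] at h2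
              have h3 : a (n - q + 1) = ((n - q : ℕ) : ℤ) + 2 := by
                rw [IH (n - q + 1) (by omega)]
                push_cast
                ring
              have h4 : (q : ℤ) ∣ (a (n + 1) - (((n - q : ℕ) : ℤ) + 2)) := by
                rw [← h3]; exact h2
              have h5 : (q : ℤ) ∣ ((n : ℤ) + 1 - (((n - q : ℕ) : ℤ) + 2)) := by
                have h6 : (q : ℤ) ∣ (a (n + 1) - ((n : ℤ) + 1)) := hdvd
                have h9 := dvd_sub h4 h6
                have he9 : (a (n + 1) - (((n - q : ℕ) : ℤ) + 2))
                    - (a (n + 1) - ((n : ℤ) + 1))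
                    = ((n : ℤ) + 1 - (((n - q : ℕ) : ℤ) + 2)) := by ring
                rwa [he9] at h9
              have h7 : ((n : ℤ) + 1 - (((n - q : ℕ) : ℤ) + 2)) = (q : ℤ) - 1 := by
                omega
              rw [h7] at h5
              have h8 : (q : ℤ) ∣ 1 := by
                have h9 := dvd_sub (dvd_refl (q : ℤ)) h5
                have he9 : (q : ℤ) - ((q : ℤ) - 1) = 1 := by ring
                rwa [he9] at h9
              have := Int.le_of_dvd (by norm_num) h8
              have := hq.two_le
              omega
          -- D not 0 nor -1
          have hDne0 : D ≠ 0 := by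
            intro h0
            have h1 : a (n + 1) = a n := by
              rw [IH n le_rfl, hADval, h0]; ring
            exact hinj n (n + 1) (by omega) h1.symm
          have hDnem1 : D ≠ -1 := by
            intro hm1
            have h1 : a (n + 1) = (n : ℤ) := by rw [hADval, hm1]; ring
            rcases Nat.eq_zero_or_pos n with h0 | h0
            · apply hnz 1 le_rfl
              rw [h0] at h1
              simpa using h1
            · have h2 : a (n - 1) = (n : ℤ) := by
                rw [IH (n - 1) (by omega)]
                omega
              exact hinj (n - 1) (n + 1) (by omega) (by rw [h1, h2])
          -- |D| is a power of the prime n+1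
          set Dn : ℕ := D.natAbs with hDnat
          have habs := Int.natAbs_eq D
          rw [← hDnat] at habs
          have hDn2 : 2 ≤ Dn := by
            by_contra hc
            push_neg at hc
            have h01 : Dn = 0 ∨ Dn = 1 := by omega
            rcases h01 with h | h
            · exact hDne0 (Int.natAbs_eq_zero.mp h)
            · rcases habs with he | he
              · apply hDnot1; rw [he, h]; norm_num
              · apply hDnem1; rw [he, h]; norm_num
          have hdvd_transfer : ∀ q : ℕ, q ∣ Dn → (q : ℤ) ∣ D := by
            intro q hqd
            have : ((q : ℤ)).natAbs ∣ D.natAbs := by simpa using hqd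
            exact Int.natAbs_dvd_natAbs.mp this
          have hprime_p : Nat.Prime (n + 1) := by
            obtain ⟨q, hqp, hqd⟩ := Nat.exists_prime_and_dvd (show Dn ≠ 1 by omega)
            have h1 := hsmallp q hqp (hdvd_transfer q hqd)
            rwa [← h1]
          have hppow : ∃ f, 1 ≤ f ∧ Dn = (n + 1) ^ f := by
            have h := Nat.eq_prime_pow_of_unique_prime_dvd (p := n + 1)
              (show Dn ≠ 0 by omega)
              (fun {d} hd hdd => hsmallp d hd (hdvd_transfer d hdd))
            refine ⟨Dn.primeFactorsList.length, ?_, h⟩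
            by_contra hlen
            push_neg at hlen
            have h0 : Dn.primeFactorsList.length = 0 := by omega
            rw [h0, pow_zero] at h
            omega
          obtain ⟨f, hf1, hDnf⟩ := hppow
          have hp2 : 2 ≤ n + 1 := hprime_p.two_le
          rcases habs with hsign | hsign
          · -- positive case : a (n+1) = (n+1) + (n+1)^f
            have hA : a (n + 1) = ((n : ℤ) + 1) + ((n : ℤ) + 1) ^ f := by
              rw [hADval, hsign, hDnf]
              push_cast
              ring
            rcases eq_or_lt_of_le hf1 with hf | hf2
            · -- f = 1 : Bertrand
              obtain ⟨Q, hQp, hQgt, hQle⟩ :=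
                Nat.exists_prime_lt_and_le_two_mul (n + 1) (by omega)
              have hQne : Q ≠ 2 * (n + 1) := by
                intro hEq
                rcases (hQp.eq_one_or_self_of_dvd 2 (by rw [hEq]; exact ⟨n + 1, rfl⟩))
                  with h | h
                · omega
                · omega
              have hiQ : 2 * (n + 1) - 1 - Q ≤ n := by omega
              have hdvdQ : (Q : ℤ) ∣ (a (n + 1) - a (2 * (n + 1) - 1 - Q)) := by
                rw [IH _ hiQ, hA, ← hf, pow_one]
                have he1 : ((2 * (n + 1) - 1 - Q : ℕ) : ℤ) = 2 * ((n : ℤ) + 1) - 1 - Q := by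
                  omega
                rw [he1]
                have he2 : ((n : ℤ) + 1) + ((n : ℤ) + 1)
                    - (2 * ((n : ℤ) + 1) - 1 - (Q : ℤ) + 1) = (Q : ℤ) := by ring
                rw [he2]
              obtain ⟨j, hj1, hjn, hdj⟩ := hfoldlem n _ Q hiQ hQp hdvdQ
              rw [IH j hjn] at hdj
              have hQj : (Q : ℤ) ≤ (j : ℤ) + 1 := Int.le_of_dvd (by positivity) hdj
              have : Q ≤ j + 1 := by exact_mod_cast hQj
              omega
            · -- f ≥ 2 : smooth block
              have hsmooth : ∀ t, 1 ≤ t → t ≤ n → ∀ q, Nat.Prime q →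
                  q ∣ ((n + 1) ^ f + t) → q ≤ n := by
                intro t ht1 htk q hqp hqd
                have hin : n - t ≤ n := by omega
                have hdvdq : (q : ℤ) ∣ (a (n + 1) - a (n - t)) := by
                  have hval : a (n + 1) - a (n - t) = (((n + 1) ^ f + t : ℕ) : ℤ) := by
                    rw [hA, IH (n - t) hin]
                    push_cast
                    omega
                  rw [hval]
                  exact_mod_cast Int.natCast_dvd_natCast.mpr hqd
                obtain ⟨j, hj1, hjn, hdj⟩ := hfoldlem n _ q hin hqp hdvdq
                rw [IH j hjn] at hdj
                have hqle : q ≤ j + 1 := by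
                  have := Int.le_of_dvd (by positivity) hdj
                  exact_mod_cast this
                have hqnep : q ≠ n + 1 := by
                  intro hEq
                  have hpN : (n + 1) ∣ (n + 1) ^ f := dvd_pow_self _ (by omega)
                  have hqt : (n + 1) ∣ t := by
                    have := (Nat.dvd_add_right hpN).mp (hEq ▸ hqd)
                    exact this
                  have := Nat.le_of_dvd (by omega) hqt
                  omega
                omega
              rcases eq_or_lt_of_le hp2 with hp2' | hp3
              · -- n + 1 = 2, block length 1
                have hn1 : n = 1 := by omega
                obtain ⟨q, hqp, hqd⟩ :=
                  Nat.exists_prime_and_dvd (show (n + 1) ^ f + 1 ≠ 1 by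
                    have := Nat.one_le_pow f (n + 1) (by omega)
                    omega)
                have h1 := hsmooth 1 le_rfl (by omega) q hqp hqd
                have := hqp.two_le
                omega
              · -- n + 1 ≥ 3 odd prime
                have hodd : Odd (n + 1) := hprime_p.odd_of_ne_two (by omega)
                have hke : Even n := by
                  rcases hodd with ⟨m, hm⟩
                  exact ⟨m, by omega⟩
                have hNge : n * (n + 1) ≤ (n + 1) ^ f := by
                  have h1 : (n + 1) ^ 2 ≤ (n + 1) ^ f :=
                    Nat.pow_le_pow_right (by omega) hf2
                  nlinarith
                exact smooth_block_contradiction n ((n + 1) ^ f) (by omega) hke hNge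
                  hsmooth
          · -- negative case : a (n+1) = (n+1) - (n+1)^f
            have hA : a (n + 1) = ((n : ℤ) + 1) - ((n : ℤ) + 1) ^ f := by
              rw [hADval, hsign, hDnf]
              push_cast
              ring
            rcases eq_or_lt_of_le hf1 with hf | hf2
            · -- f = 1 : a (n+1) = 0
              apply hnz (n + 1) (by omega)
              rw [hA, ← hf, pow_one]
              ring
            · -- f ≥ 2 : smooth block below (n+1)^f
              have hpf2 : (n + 1) ^ 2 ≤ (n + 1) ^ f := Nat.pow_le_pow_right (by omega) hf2
              have hpp : n + 1 ≤ (n + 1) ^ f := by nlinarith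
              have hsmooth : ∀ t, 1 ≤ t → t ≤ n → ∀ q, Nat.Prime q →
                  q ∣ (((n + 1) ^ f - (n + 1)) + t) → q ≤ n := by
                intro t ht1 htk q hqp hqd
                have hin : t - 1 ≤ n := by omega
                have hdvdq : (q : ℤ) ∣ (a (n + 1) - a (t - 1)) := by
                  have hval : a (t - 1) - a (n + 1)
                      = (((n + 1) ^ f - (n + 1) + t : ℕ) : ℤ) := by
                    rw [hA, IH (t - 1) hin]
                    have hc : (((n + 1) ^ f - (n + 1) + t : ℕ) : ℤ)
                        = ((n : ℤ) + 1) ^ f - ((n : ℤ) + 1) + t := by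
                      push_cast [Nat.cast_sub hpp]
                      ring
                    rw [hc]
                    have hc2 : ((t - 1 : ℕ) : ℤ) = (t : ℤ) - 1 := by omega
                    rw [hc2]
                    ring
                  have h1 : (q : ℤ) ∣ (a (t - 1) - a (n + 1)) := by
                    rw [hval]
                    exact_mod_cast Int.natCast_dvd_natCast.mpr hqd
                  have h2 : (q : ℤ) ∣ -(a (t - 1) - a (n + 1)) := Dvd.dvd.neg_right h1
                  have he : -(a (t - 1) - a (n + 1)) = a (n + 1) - a (t - 1) := by ring
                  rwa [he] at h2
                obtain ⟨j, hj1, hjn, hdj⟩ := hfoldlem n _ q hin hqp hdvdq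
                rw [IH j hjn] at hdj
                have hqle : q ≤ j + 1 := by
                  have := Int.le_of_dvd (by positivity) hdj
                  exact_mod_cast this
                have hqnep : q ≠ n + 1 := by
                  intro hEq
                  have hpN : (n + 1) ∣ ((n + 1) ^ f - (n + 1)) :=
                    Nat.dvd_sub (dvd_pow_self _ (by omega)) dvd_rfl
                  have hqt : (n + 1) ∣ t := (Nat.dvd_add_right hpN).mp (hEq ▸ hqd)
                  have := Nat.le_of_dvd (by omega) hqt
                  omega
                omega
              rcases eq_or_lt_of_le hp2 with hp2' | hp3
              · -- n + 1 = 2, block length 1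
                obtain ⟨q, hqp, hqd⟩ :=
                  Nat.exists_prime_and_dvd (show (n + 1) ^ f - (n + 1) + 1 ≠ 1 by
                    have h9 : n + 1 + 1 ≤ (n + 1) ^ 2 := by nlinarith
                    omega)
                have h1 := hsmooth 1 le_rfl (by omega) q hqp hqd
                have := hqp.two_le
                omega
              · -- n + 1 ≥ 3 odd prime
                have hodd : Odd (n + 1) := hprime_p.odd_of_ne_two (by omega)
                have hke : Even n := by
                  rcases hodd with ⟨m, hm⟩
                  exact ⟨m, by omega⟩
                have hNge : n * (n + 1) ≤ (n + 1) ^ f - (n + 1) := by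
                  have h1 : n * (n + 1) + (n + 1) ≤ (n + 1) ^ 2 := by nlinarith
                  omega
                exact smooth_block_contradiction n ((n + 1) ^ f - (n + 1)) (by omega)
                  hke hNge hsmooth
  -- conclude : u = X + 1
  have heval : ∀ m : ℕ, Polynomial.eval ((m : ℤ) + 1) u = (m : ℤ) + 2 := by
    intro m
    have h1 := hsucc m
    rw [key m m le_rfl, key (m + 1) (m + 1) le_rfl] at h1
    push_cast at h1
    linarith [h1]
  have hg : u - (Polynomial.X + 1) = 0 := by
    apply Polynomial.eq_zero_of_infinite_isRoot
    apply Set.infinite_of_injective_forall_mem (f := fun m : ℕ => (m : ℤ) + 1)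
    · intro x y hxy
      simp only [add_left_inj, Nat.cast_inj] at hxy
      exact hxy
    · intro m
      simp only [Set.mem_setOf_eq, Polynomial.IsRoot, Polynomial.eval_sub,
        Polynomial.eval_add, Polynomial.eval_X, Polynomial.eval_one, heval m]
      ring
  have := sub_eq_zero.mp hg
  exact this

private lemma hard_neg_one (u : Polynomial ℤ)
    (hL : LocallyNilpotentAt u (-1)) (hN : ¬ IsNilpotentAt u (-1)) :
    u = Polynomial.X - 1 := by
  set v : Polynomial ℤ := -(u.comp (-Polynomial.X)) with hv
  have hveval : ∀ x : ℤ, Polynomial.eval x v = -(Polynomial.eval (-x) u) := by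
    intro x; simp [hv]
  have hiter : ∀ m, iterEval v m 1 = -(iterEval u m (-1)) := by
    intro m
    induction m with
    | zero => simp [iterEval]
    | succ m ih =>
        rw [iterEval_succ, iterEval_succ, ih, hveval]
        rw [neg_neg]
  have hLv : LocallyNilpotentAt v 1 := by
    intro p hp
    obtain ⟨m, hm, hd⟩ := hL p hp
    exact ⟨m, hm, by rw [hiter]; exact hd.neg_right⟩
  have hNv : ¬ IsNilpotentAt v 1 := by
    rintro ⟨m, hm, h0⟩
    apply hN
    refine ⟨m, hm, ?_⟩
    rw [hiter] at h0
    linarith [h0]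
  have hv1 := hard_one v hLv hNv
  have h2 : u.comp (-Polynomial.X) = -(Polynomial.X + 1) := by
    have h3 := congrArg Neg.neg hv1
    rw [hv, neg_neg] at h3
    exact h3
  have h3 : u = (u.comp (-Polynomial.X)).comp (-Polynomial.X) := by
    rw [Polynomial.comp_assoc]
    simp
  rw [h3, h2]
  simp
  ring

private lemma iter_X_add_one (m : ℕ) :
    iterEval (Polynomial.X + 1) m 1 = (m : ℤ) + 1 := by
  induction m with
  | zero => simp [iterEval]
  | succ m ih =>
      rw [iterEval_succ, ih]
      simp only [Polynomial.eval_add, Polynomial.eval_X, Polynomial.eval_one]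
      push_cast
      ring

private lemma iter_X_sub_one (m : ℕ) :
    iterEval (Polynomial.X - 1) m (-1) = -(m : ℤ) - 1 := by
  induction m with
  | zero => simp [iterEval]
  | succ m ih =>
      rw [iterEval_succ, ih]
      simp only [Polynomial.eval_sub, Polynomial.eval_X, Polynomial.eval_one]
      push_cast
      ring

private lemma easy_one :
    LocallyNilpotentAt (Polynomial.X + 1) 1 ∧ ¬ IsNilpotentAt (Polynomial.X + 1) 1 := by
  constructor
  · intro p hp
    have hp2 := hp.two_le
    refine ⟨p - 1, by omega, ?_⟩
    rw [iter_X_add_one]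
    have : ((p - 1 : ℕ) : ℤ) + 1 = (p : ℤ) := by omega
    rw [this]
  · rintro ⟨m, hm, h0⟩
    rw [iter_X_add_one] at h0
    omega

private lemma easy_neg_one :
    LocallyNilpotentAt (Polynomial.X - 1) (-1) ∧
      ¬ IsNilpotentAt (Polynomial.X - 1) (-1) := by
  constructor
  · intro p hp
    have hp2 := hp.two_le
    refine ⟨p - 1, by omega, ?_⟩
    rw [iter_X_sub_one]
    have : -((p - 1 : ℕ) : ℤ) - 1 = -(p : ℤ) := by omega
    rw [this]
    exact (dvd_refl _).neg_right
  · rintro ⟨m, hm, h0⟩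
    rw [iter_X_sub_one] at h0
    omega

theorem S_one_and_S_neg_one_are_singletons (u : Polynomial ℤ) (hu : 0 < u.natDegree) :
    ((LocallyNilpotentAt u 1 ∧ ¬ IsNilpotentAt u 1) ↔ u = Polynomial.X + 1) ∧
    ((LocallyNilpotentAt u (-1) ∧ ¬ IsNilpotentAt u (-1)) ↔ u = Polynomial.X - 1) := by
  constructor
  · constructor
    · rintro ⟨hl, hn⟩
      exact hard_one u hl hn
    · rintro rfl
      exact easy_one
  · constructor
    · rintro ⟨hl, hn⟩
      exact hard_neg_one u hl hn
    · rintro rfl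
      exact easy_neg_one
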